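/- arXiv:2509.07421 — 5 statements merged into one kernel-verified Lean document; each statement's English description precedes it below -/
import Mathlib

section
/- Let Δ be an n×n Hermitian complex matrix with eigenvalues η₁, …, ηₙ. Then for every n×n complex matrix Π such that both Π and I − Π are positive semidefinite, the real part of Tr(Π Δ) is at most Σᵢ max(ηᵢ, 0), and this bound is attained by the orthogonal projection onto the span of the eigenvectors of Δ with positive eigenvalues. -/
/-!
Write `Δ = U D Uᴴ` with `U` the eigenvector unitary and `D = diag η`. Then `Tr(Π Δ) = Σᵢ Qᵢᵢ ηᵢ`
with `Q = Uᴴ Π U`, and `0 ≤ Q ≤ I` because `0 ≤ Π ≤ I`, so every `Re Qᵢᵢ` lies in `[0, 1]` and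
the `i`-th term is at most `max ηᵢ 0`. For the spectral projection onto the positive eigenvalues,
`Q` is the diagonal `0/1` matrix selecting `ηᵢ > 0`, so every term is attained.
-/

open scoped ComplexOrder Matrix

lemma Unitary.mul_one_sub_mul_star {R : Type*} [Ring R] [StarMul R] {u : R} (hu : u ∈ unitary R)
    (x : R) : u * (1 - x) * star u = 1 - u * x * star u := by
  rw [mul_sub, sub_mul, mul_one, Unitary.mul_star_self_of_mem hu]

lemma mul_le_max_zero_of_mem_Icc {t η : ℝ} (ht : t ∈ Set.Icc 0 1) : t * η ≤ max η 0 := by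
  rcases le_total 0 η with h | h
  · exact (mul_le_of_le_one_left h ht.2).trans (le_max_left _ _)
  · exact (mul_nonpos_of_nonneg_of_nonpos ht.1 h).trans (le_max_right _ _)

namespace Matrix

variable {𝕜 n : Type*} [RCLike 𝕜] [DecidableEq n]

lemma PosSemidef.re_diag_mem_Icc {Q : Matrix n n 𝕜} (hQ : Q.PosSemidef)
    (hQ' : (1 - Q).PosSemidef) (i : n) : RCLike.re (Q i i) ∈ Set.Icc 0 1 := by
  have h0 := RCLike.nonneg_iff.mp (hQ.diag_nonneg (i := i))
  have h1 := RCLike.nonneg_iff.mp (hQ'.diag_nonneg (i := i))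
  simp only [sub_apply, one_apply_eq, map_sub, RCLike.one_re, sub_nonneg] at h1
  exact ⟨h0.1, h1.1⟩

variable [Fintype n]

namespace IsHermitian

variable {A : Matrix n n 𝕜} (hA : A.IsHermitian)

lemma trace_mul_eq_sum_diag_mul_eigenvalues (P : Matrix n n 𝕜) :
    (P * A).trace = ∑ i, (star (hA.eigenvectorUnitary : Matrix n n 𝕜) * P *
      hA.eigenvectorUnitary) i i * hA.eigenvalues i := by
  conv_lhs => rw [hA.spectral_theorem, Unitary.conjStarAlgAut_apply, ← mul_assoc, trace_mul_cycle,
    ← mul_assoc]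
  simp [trace, mul_diagonal]

theorem re_trace_mul_le_sum_max_eigenvalues {P : Matrix n n 𝕜} (hP : P.PosSemidef)
    (hP' : (1 - P).PosSemidef) :
    RCLike.re (P * A).trace ≤ ∑ i, max (hA.eigenvalues i) 0 := by
  set U : Matrix n n 𝕜 := (hA.eigenvectorUnitary : Matrix n n 𝕜)
  have hQ : (star U * P * U).PosSemidef := hP.conjTranspose_mul_mul_same U
  have hQ' : (1 - star U * P * U).PosSemidef := by
    have h := Unitary.mul_one_sub_mul_star (Unitary.star_mem hA.eigenvectorUnitary.2) P
    rw [star_star] at h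
    exact h ▸ hP'.conjTranspose_mul_mul_same U
  rw [hA.trace_mul_eq_sum_diag_mul_eigenvalues, map_sum]
  refine Finset.sum_le_sum fun i _ => ?_
  rw [RCLike.re_mul_ofReal]
  exact mul_le_max_zero_of_mem_Icc (hQ.re_diag_mem_Icc hQ' i)

noncomputable def posSpectralProjection : Matrix n n 𝕜 :=
  (hA.eigenvectorUnitary : Matrix n n 𝕜) *
    diagonal (fun i => if 0 < hA.eigenvalues i then 1 else 0) *
    (hA.eigenvectorUnitary : Matrix n n 𝕜)ᴴ

theorem posSemidef_posSpectralProjection : hA.posSpectralProjection.PosSemidef := by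
  refine (PosSemidef.diagonal fun i => ?_).mul_mul_conjTranspose_same _
  dsimp only [Pi.zero_apply]
  split_ifs <;> simp

theorem posSemidef_one_sub_posSpectralProjection : (1 - hA.posSpectralProjection).PosSemidef := by
  rw [posSpectralProjection, ← star_eq_conjTranspose,
    ← Unitary.mul_one_sub_mul_star hA.eigenvectorUnitary.2, ← diagonal_one, diagonal_sub]
  refine (PosSemidef.diagonal fun i => ?_).mul_mul_conjTranspose_same _
  dsimp only [Pi.zero_apply, Pi.sub_apply]
  split_ifs <;> simp

theorem re_trace_posSpectralProjection_mul :
    RCLike.re (hA.posSpectralProjection * A).trace = ∑ i, max (hA.eigenvalues i) 0 := by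
  have hconj : star (hA.eigenvectorUnitary : Matrix n n 𝕜) * hA.posSpectralProjection *
      (hA.eigenvectorUnitary : Matrix n n 𝕜) =
        diagonal (fun i => if 0 < hA.eigenvalues i then 1 else 0) := by
    simp only [posSpectralProjection, ← star_eq_conjTranspose, mul_assoc,
      Unitary.coe_star_mul_self, mul_one]
    simp only [← mul_assoc, Unitary.coe_star_mul_self, one_mul]
  rw [hA.trace_mul_eq_sum_diag_mul_eigenvalues, hconj, map_sum]
  refine Finset.sum_congr rfl fun i _ => ?_
  rw [diagonal_apply_eq]
  split_ifs with h
  · simp [h.le]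
  · simp [not_lt.mp h]

end IsHermitian
end Matrix

/-- For a Hermitian matrix `Δ` with eigenvalues `ηᵢ`, and any matrix `Π` with both `Π` and
`I − Π` positive semidefinite, `Re Tr(Π Δ) ≤ Σᵢ max(ηᵢ, 0)`; the bound is attained by the
orthogonal projection onto the span of the eigenvectors of `Δ` with positive eigenvalues. -/
theorem trace_posPart_bound {n : ℕ} (Δ : Matrix (Fin n) (Fin n) ℂ) (hΔ : Δ.IsHermitian) :
    (∀ Pm : Matrix (Fin n) (Fin n) ℂ, Pm.PosSemidef → (1 - Pm).PosSemidef →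
      (Pm * Δ).trace.re ≤ ∑ i, max (hΔ.eigenvalues i) 0) ∧
    (∀ Ppos : Matrix (Fin n) (Fin n) ℂ,
      Ppos = (hΔ.eigenvectorUnitary : Matrix (Fin n) (Fin n) ℂ) *
          Matrix.diagonal (fun i => if 0 < hΔ.eigenvalues i then (1 : ℂ) else 0) *
          (hΔ.eigenvectorUnitary : Matrix (Fin n) (Fin n) ℂ).conjTranspose →
      Ppos.PosSemidef ∧ (1 - Ppos).PosSemidef ∧
        (Ppos * Δ).trace.re = ∑ i, max (hΔ.eigenvalues i) 0) :=
  ⟨fun _ hP hP' => hΔ.re_trace_mul_le_sum_max_eigenvalues hP hP',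
    fun _ hP => hP ▸ ⟨hΔ.posSemidef_posSpectralProjection,
      hΔ.posSemidef_one_sub_posSpectralProjection, hΔ.re_trace_posSpectralProjection_mul⟩⟩
end

section
/- (Binary Helstrom bound, pure states, equal priors.) Let φ₀ and φ₁ be unit vectors in ℂⁿ and set ρᵢ = φᵢ φᵢ*. Then for every n×n complex matrix Π₀ with Π₀ and I − Π₀ positive semidefinite, the average error probability ½·Re Tr((I − Π₀) ρ₀) + ½·Re Tr(Π₀ ρ₁) is at least ½(1 − √(1 − |⟨φ₀, φ₁⟩|²)), and this value is attained by some such Π₀. -/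
/-!
For `0 ≤ P ≤ 1` write `a = ⟨φ₀, P φ₀⟩` and `b = ⟨φ₁, P φ₁⟩`; the error probability is
`½ (1 - (a - b))`. Splitting `⟨φ₀, φ₁⟩ = ⟨φ₀, P φ₁⟩ + ⟨φ₀, (1 - P) φ₁⟩` and applying
Cauchy–Schwarz to the semi-inner products defined by `P` and `1 - P` gives
`|⟨φ₀, φ₁⟩| ≤ √(ab) + √((1 - a)(1 - b))`, and this constraint forces
`a - b ≤ √(1 - |⟨φ₀, φ₁⟩|²)`. Equality is attained by the projection onto the eigenvector of
`ρ₀ - ρ₁` for its positive eigenvalue `√(1 - |⟨φ₀, φ₁⟩|²)`.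
-/

open scoped ComplexOrder ComplexConjugate
open Matrix RCLike

lemma sq_sub_sq_le_sqrt_one_sub_sq {p p' q q' c : ℝ} (hp : p ^ 2 + p' ^ 2 = 1)
    (hq : q ^ 2 + q' ^ 2 = 1) (hc₀ : 0 ≤ c) (hc : c ≤ p * q + p' * q') :
    p ^ 2 - q ^ 2 ≤ √(1 - c ^ 2) := by
  have hfactor : p ^ 2 - q ^ 2 = (p * q' - p' * q) * (p * q' + p' * q) := by
    linear_combination q ^ 2 * hp - p ^ 2 * hq
  have hlagrange : (p * q' - p' * q) ^ 2 = 1 - (p * q + p' * q') ^ 2 := by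
    linear_combination (q ^ 2 + q' ^ 2) * hp + hq
  have hle_one : (p * q' + p' * q) ^ 2 ≤ 1 := by
    nlinarith [sq_nonneg (p * q - p' * q')]
  refine Real.le_sqrt_of_sq_le ?_
  calc (p ^ 2 - q ^ 2) ^ 2 = (p * q' - p' * q) ^ 2 * (p * q' + p' * q) ^ 2 := by
        rw [hfactor, mul_pow]
    _ ≤ (p * q' - p' * q) ^ 2 := mul_le_of_le_one_right (sq_nonneg _) hle_one
    _ ≤ 1 - c ^ 2 := by rw [hlagrange]; nlinarith [mul_self_le_mul_self hc₀ hc]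

lemma EuclideanSpace.star_dotProduct_ofLp {ι 𝕜 : Type*} [Fintype ι] [RCLike 𝕜]
    (x y : EuclideanSpace 𝕜 ι) : star x.ofLp ⬝ᵥ y.ofLp = inner 𝕜 x y :=
  dotProduct_comm _ _

namespace Matrix

variable {n 𝕜 : Type*} [Fintype n] [RCLike 𝕜]

lemma trace_mul_vecMulVec_star (P : Matrix n n 𝕜) (x : n → 𝕜) :
    (P * vecMulVec x (star x)).trace = star x ⬝ᵥ (P *ᵥ x) := by
  rw [mul_vecMulVec, trace_vecMulVec, dotProduct_comm]

lemma re_dotProduct_one_sub_mulVec [DecidableEq n] (P : Matrix n n 𝕜) {x : n → 𝕜}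
    (hx : star x ⬝ᵥ x = 1) :
    re (star x ⬝ᵥ ((1 - P) *ᵥ x)) = 1 - re (star x ⬝ᵥ (P *ᵥ x)) := by
  rw [sub_mulVec, one_mulVec, dotProduct_sub, hx, map_sub, one_re]

lemma PosSemidef.norm_dotProduct_mulVec_le {P : Matrix n n 𝕜} (hP : P.PosSemidef)
    (x y : n → 𝕜) :
    ‖star x ⬝ᵥ (P *ᵥ y)‖ ≤ √(re (star x ⬝ᵥ (P *ᵥ x))) * √(re (star y ⬝ᵥ (P *ᵥ y))) := by
  let := P.toSeminormedAddCommGroup hP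
  let := P.toInnerProductSpace hP
  have h := norm_inner_le_norm (𝕜 := 𝕜) x y
  rw [norm_eq_sqrt_re_inner (𝕜 := 𝕜) x, norm_eq_sqrt_re_inner (𝕜 := 𝕜) y] at h
  change ‖(P *ᵥ y) ⬝ᵥ star x‖ ≤ √(re ((P *ᵥ x) ⬝ᵥ star x)) * √(re ((P *ᵥ y) ⬝ᵥ star y)) at h
  simpa only [dotProduct_comm (P *ᵥ _)] using h

theorem PosSemidef.re_dotProduct_mulVec_sub_le_sqrt [DecidableEq n] {P : Matrix n n 𝕜}
    (hP : P.PosSemidef) (hP' : (1 - P).PosSemidef) {x y : n → 𝕜}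
    (hx : star x ⬝ᵥ x = 1) (hy : star y ⬝ᵥ y = 1) :
    re (star x ⬝ᵥ (P *ᵥ x)) - re (star y ⬝ᵥ (P *ᵥ y)) ≤ √(1 - ‖star x ⬝ᵥ y‖ ^ 2) := by
  set a := re (star x ⬝ᵥ (P *ᵥ x))
  set b := re (star y ⬝ᵥ (P *ᵥ y))
  have ha : 0 ≤ a := hP.re_dotProduct_nonneg x
  have hb : 0 ≤ b := hP.re_dotProduct_nonneg y
  have ha' : 0 ≤ 1 - a := re_dotProduct_one_sub_mulVec P hx ▸ hP'.re_dotProduct_nonneg x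
  have hb' : 0 ≤ 1 - b := re_dotProduct_one_sub_mulVec P hy ▸ hP'.re_dotProduct_nonneg y
  have hsplit : star x ⬝ᵥ y = star x ⬝ᵥ (P *ᵥ y) + star x ⬝ᵥ ((1 - P) *ᵥ y) := by
    rw [sub_mulVec, one_mulVec, dotProduct_sub, add_sub_cancel]
  have hc : ‖star x ⬝ᵥ y‖ ≤ √a * √b + √(1 - a) * √(1 - b) := by
    calc ‖star x ⬝ᵥ y‖ ≤ ‖star x ⬝ᵥ (P *ᵥ y)‖ + ‖star x ⬝ᵥ ((1 - P) *ᵥ y)‖ :=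
          hsplit ▸ norm_add_le _ _
      _ ≤ √a * √b + √(1 - a) * √(1 - b) := by
          refine add_le_add (hP.norm_dotProduct_mulVec_le x y) ?_
          simpa only [re_dotProduct_one_sub_mulVec P hx, re_dotProduct_one_sub_mulVec P hy]
            using hP'.norm_dotProduct_mulVec_le x y
  have hpa : √a ^ 2 + √(1 - a) ^ 2 = 1 := by rw [Real.sq_sqrt ha, Real.sq_sqrt ha']; ring
  have hpb : √b ^ 2 + √(1 - b) ^ 2 = 1 := by rw [Real.sq_sqrt hb, Real.sq_sqrt hb']; ring
  have h := sq_sub_sq_le_sqrt_one_sub_sq hpa hpb (norm_nonneg _) hc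
  rwa [Real.sq_sqrt ha, Real.sq_sqrt hb] at h

lemma dotProduct_vecMulVec_star_mulVec (u x : n → 𝕜) :
    star x ⬝ᵥ (vecMulVec u (star u) *ᵥ x) = conj (star u ⬝ᵥ x) * (star u ⬝ᵥ x) := by
  rw [vecMulVec_mulVec, op_smul_eq_smul, dotProduct_smul, smul_eq_mul, star_dotProduct x,
    mul_comm]
  rfl

lemma posSemidef_one_sub_vecMulVec_star [DecidableEq n] {u : n → 𝕜} (hu : star u ⬝ᵥ u = 1) :
    (1 - vecMulVec u (star u)).PosSemidef := by
  have hQ : (1 - vecMulVec u (star u))ᴴ = 1 - vecMulVec u (star u) :=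
    (PosSemidef.one.isHermitian.sub (posSemidef_vecMulVec_self_star u).isHermitian).eq
  have hQQ : (1 - vecMulVec u (star u))ᴴ * (1 - vecMulVec u (star u)) =
      1 - vecMulVec u (star u) := by
    rw [hQ, sub_mul, mul_sub, mul_sub, vecMulVec_mul_vecMulVec, hu, one_smul, one_mul, one_mul,
      mul_one]
    abel
  exact hQQ ▸ posSemidef_conjTranspose_mul_self _

/-- `u` is the normalised eigenvector `(1 + s) x - conj ⟨x, y⟩ y` of `x x* - y y*` for the
eigenvalue `s = √(1 - ‖⟨x, y⟩‖²)`. -/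
lemma exists_unit_vecMulVec_sub_eq_sqrt {x y : n → 𝕜} (hx : star x ⬝ᵥ x = 1)
    (hy : star y ⬝ᵥ y = 1) (hs₀ : 0 < √(1 - ‖star x ⬝ᵥ y‖ ^ 2)) :
    ∃ u : n → 𝕜, star u ⬝ᵥ u = 1 ∧
      star x ⬝ᵥ (vecMulVec u (star u) *ᵥ x) - star y ⬝ᵥ (vecMulVec u (star u) *ᵥ y) =
        √(1 - ‖star x ⬝ᵥ y‖ ^ 2) := by
  set c := star x ⬝ᵥ y
  set s := √(1 - ‖c‖ ^ 2)
  have hs : s ^ 2 = 1 - ‖c‖ ^ 2 := Real.sq_sqrt (Real.sqrt_pos.1 hs₀).le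
  set N := √(2 * s ^ 2 * (1 + s))
  have hN : (N : 𝕜) ^ 2 = 2 * s ^ 2 * (1 + s) := by
    rw [← ofReal_pow, Real.sq_sqrt (by positivity)]; push_cast; ring
  have hN₀ : (N : 𝕜) ≠ 0 := ofReal_ne_zero.2 (Real.sqrt_pos.2 (by positivity)).ne'
  have hyx : star y ⬝ᵥ x = conj c := star_dotProduct y x
  have hcc : conj c * c = 1 - (s : 𝕜) ^ 2 := by
    rw [RCLike.conj_mul, ← ofReal_pow, ← ofReal_pow, hs, ofReal_sub, ofReal_one, sub_sub_cancel]
  set u : n → 𝕜 := ((1 + s) / N : 𝕜) • x - (conj c / N) • y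
  have hstar (z : n → 𝕜) :
      star u ⬝ᵥ z = (1 + s) / N * (star x ⬝ᵥ z) - c / N * (star y ⬝ᵥ z) := by
    simp only [u, star_sub, star_smul, sub_dotProduct, smul_dotProduct, smul_eq_mul, star_div₀,
      star_add, star_one, RCLike.star_def, conj_ofReal, conj_conj]
  have hux : star u ⬝ᵥ x = (s + s ^ 2) / N := by
    rw [hstar, hx, hyx]; linear_combination (-1 / N : 𝕜) * hcc
  have huy : star u ⬝ᵥ y = s / N * c := by
    rw [hstar, hy]; ring
  refine ⟨u, ?_, ?_⟩
  · conv_lhs => enter [2]; simp only [u]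
    rw [dotProduct_sub, dotProduct_smul, dotProduct_smul, hux, huy, smul_eq_mul, smul_eq_mul]
    field_simp
    linear_combination (-s : 𝕜) * hcc - hN
  · rw [dotProduct_vecMulVec_star_mulVec, dotProduct_vecMulVec_star_mulVec, hux, huy]
    simp only [map_div₀, map_mul, map_add, map_pow, conj_ofReal]
    field_simp
    linear_combination (-s : 𝕜) * hcc - hN

theorem exists_posSemidef_re_dotProduct_mulVec_sub_eq_sqrt [DecidableEq n] {x y : n → 𝕜}
    (hx : star x ⬝ᵥ x = 1) (hy : star y ⬝ᵥ y = 1) :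
    ∃ P : Matrix n n 𝕜, P.PosSemidef ∧ (1 - P).PosSemidef ∧
      re (star x ⬝ᵥ (P *ᵥ x)) - re (star y ⬝ᵥ (P *ᵥ y)) = √(1 - ‖star x ⬝ᵥ y‖ ^ 2) := by
  rcases (Real.sqrt_nonneg (1 - ‖star x ⬝ᵥ y‖ ^ 2)).eq_or_lt with hs₀ | hs₀
  · exact ⟨0, .zero, by simpa using PosSemidef.one, by simpa using hs₀⟩
  obtain ⟨u, hu, hval⟩ := exists_unit_vecMulVec_sub_eq_sqrt hx hy hs₀
  refine ⟨vecMulVec u (star u), posSemidef_vecMulVec_self_star u,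
    posSemidef_one_sub_vecMulVec_star hu, ?_⟩
  rw [← map_sub, hval, ofReal_re]

end Matrix

/-- Binary Helstrom bound for pure states with equal priors: for unit vectors `φ₀, φ₁` and
`ρᵢ = φᵢ φᵢ*`, every binary POVM `{Π₀, I − Π₀}` has average error probability at least
`½(1 − √(1 − |⟨φ₀,φ₁⟩|²))`, and this value is attained. -/
theorem helstrom_bound_pure {n : ℕ} (φ₀ φ₁ : EuclideanSpace ℂ (Fin n))
    (hφ₀ : ‖φ₀‖ = 1) (hφ₁ : ‖φ₁‖ = 1)
    (ρ₀ ρ₁ : Matrix (Fin n) (Fin n) ℂ)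
    (hρ₀ : ρ₀ = Matrix.vecMulVec (fun i => φ₀ i) (fun j => star (φ₀ j)))
    (hρ₁ : ρ₁ = Matrix.vecMulVec (fun i => φ₁ i) (fun j => star (φ₁ j))) :
    (∀ P₀ : Matrix (Fin n) (Fin n) ℂ, P₀.PosSemidef → (1 - P₀).PosSemidef →
      (1 / 2) * (1 - Real.sqrt (1 - ‖(inner ℂ φ₀ φ₁ : ℂ)‖ ^ 2)) ≤
        (1 / 2) * ((1 - P₀) * ρ₀).trace.re + (1 / 2) * (P₀ * ρ₁).trace.re) ∧
    (∃ P₀ : Matrix (Fin n) (Fin n) ℂ, P₀.PosSemidef ∧ (1 - P₀).PosSemidef ∧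
      (1 / 2) * ((1 - P₀) * ρ₀).trace.re + (1 / 2) * (P₀ * ρ₁).trace.re =
        (1 / 2) * (1 - Real.sqrt (1 - ‖(inner ℂ φ₀ φ₁ : ℂ)‖ ^ 2))) := by
  have hunit {φ : EuclideanSpace ℂ (Fin n)} (hφ : ‖φ‖ = 1) : star φ.ofLp ⬝ᵥ φ.ofLp = 1 := by
    rw [EuclideanSpace.star_dotProduct_ofLp, inner_self_eq_norm_sq_to_K, hφ, ofReal_one, one_pow]
  have hx := hunit hφ₀
  have hy := hunit hφ₁
  replace hρ₀ : ρ₀ = vecMulVec φ₀.ofLp (star φ₀.ofLp) := hρ₀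
  replace hρ₁ : ρ₁ = vecMulVec φ₁.ofLp (star φ₁.ofLp) := hρ₁
  have herror (P : Matrix (Fin n) (Fin n) ℂ) :
      (1 / 2) * ((1 - P) * ρ₀).trace.re + (1 / 2) * (P * ρ₁).trace.re =
        (1 / 2) * (1 - (re (star φ₀.ofLp ⬝ᵥ (P *ᵥ φ₀.ofLp)) -
          re (star φ₁.ofLp ⬝ᵥ (P *ᵥ φ₁.ofLp)))) := by
    have h := re_dotProduct_one_sub_mulVec P hx
    rw [hρ₀, hρ₁, trace_mul_vecMulVec_star, trace_mul_vecMulVec_star]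
    simp only [re_to_complex] at h ⊢
    linarith
  simp only [herror, ← EuclideanSpace.star_dotProduct_ofLp]
  refine ⟨fun P hP hP' => ?_, ?_⟩
  · linarith [hP.re_dotProduct_mulVec_sub_le_sqrt hP' hx hy]
  · obtain ⟨P, hP, hP', hval⟩ := exists_posSemidef_re_dotProduct_mulVec_sub_eq_sqrt hx hy
    exact ⟨P, hP, hP', by rw [hval]⟩
end

section
/- Fix c > 0 and define the effective rate R(t) = (1 − t)·(1 − P_e(t)) for t ∈ (0,1), where P_e(t) = ½(1 − √(1 − exp(−4·c·t/(1−t)))). Then R is unimodal on (0,1): its derivative R′ is strictly decreasing on (0,1), is positive near 0 and negative near 1, so R′ has exactly one zero t* ∈ (0,1), R is strictly increasing on (0, t*) and strictly decreasing on (t*, 1), and t* is the unique maximizer of R on (0,1). -/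
/-!
Write `u = κ t / (1 - t)` (here `κ = 4c`) and `S(u) = (1 + √(1 - e^{-u})) / 2 = 1 - P_e`
(`bpskSuccessProb`), so that `R(t) = (1 - t) S(u(t))`. Since `(1 - t) u'(t) = κ / (1 - t) = u + κ`,
the chain rule gives `R'(t) = -S(u) + S'(u) (u + κ)`, a function `G(u)` of `u` alone
(`bpskRateSlope κ`). A direct computation shows `G' < 0` on `(0, ∞)`, while `G → +∞` as `u → 0⁺`
(because `√(1 - e^{-u}) → 0`) and `G → -1` as `u → ∞`. As `u` increases from `0` to `∞` on `(0,1)`,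
`R'` is strictly decreasing, positive near `0` and negative near `1`, and a function whose
derivative behaves like this is unimodal.
-/

open Filter Topology Set Real

section Unimodal

variable {f : ℝ → ℝ} {a b : ℝ}

theorem exists_deriv_eq_zero_of_eventually_pos_of_eventually_neg (hab : a < b)
    (hf : ∀ x ∈ Ioo a b, DifferentiableAt ℝ f x) (hpos : ∀ᶠ x in 𝓝[>] a, 0 < deriv f x)
    (hneg : ∀ᶠ x in 𝓝[<] b, deriv f x < 0) : ∃ m ∈ Ioo a b, deriv f m = 0 := by
  obtain ⟨x, hx, hxpos⟩ := (Filter.eventually_mem_set.2 (Ioo_mem_nhdsGT hab)).and hpos |>.exists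
  obtain ⟨y, hy, hyneg⟩ := (Filter.eventually_mem_set.2 (Ioo_mem_nhdsLT hab)).and hneg |>.exists
  -- Darboux: the derivative has the intermediate value property.
  exact (ordConnected_Ioo.image_deriv hf).out ⟨y, hy, rfl⟩ ⟨x, hx, rfl⟩ ⟨hyneg.le, hxpos.le⟩

theorem exists_unimodal_of_strictAntiOn_deriv (hab : a < b)
    (hf : ∀ x ∈ Ioo a b, DifferentiableAt ℝ f x) (hf' : StrictAntiOn (deriv f) (Ioo a b))
    (hpos : ∀ᶠ x in 𝓝[>] a, 0 < deriv f x) (hneg : ∀ᶠ x in 𝓝[<] b, deriv f x < 0) :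
    ∃ m ∈ Ioo a b, deriv f m = 0 ∧ (∀ x ∈ Ioo a b, deriv f x = 0 → x = m) ∧
      StrictMonoOn f (Ioo a m) ∧ StrictAntiOn f (Ioo m b) ∧
      ∀ x ∈ Ioo a b, x ≠ m → f x < f m := by
  obtain ⟨m, hm, hm0⟩ := exists_deriv_eq_zero_of_eventually_pos_of_eventually_neg hab hf hpos hneg
  have hcont : ContinuousOn f (Ioo a b) := fun x hx => (hf x hx).continuousAt.continuousWithinAt
  have hmono : StrictMonoOn f (Ioc a m) :=
    strictMonoOn_of_deriv_pos (convex_Ioc a m) (hcont.mono (Ioc_subset_Ioo_right hm.2))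
      fun x hx => by
        rw [interior_Ioc] at hx
        exact hm0 ▸ hf' ⟨hx.1, hx.2.trans hm.2⟩ hm hx.2
  have hanti : StrictAntiOn f (Ico m b) :=
    strictAntiOn_of_deriv_neg (convex_Ico m b) (hcont.mono (Ico_subset_Ioo_left hm.1))
      fun x hx => by
        rw [interior_Ico] at hx
        exact hm0 ▸ hf' hm ⟨hm.1.trans hx.1, hx.2⟩ hx.1
  refine ⟨m, hm, hm0, fun x hx hx0 => hf'.injOn hx hm (hx0.trans hm0.symm),
    hmono.mono Ioo_subset_Ioc_self, hanti.mono Ioo_subset_Ico_self, fun x hx hne => ?_⟩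
  rcases hne.lt_or_gt with h | h
  · exact hmono ⟨hx.1, h.le⟩ ⟨hm.1, le_rfl⟩ h
  · exact hanti ⟨le_rfl, hm.2⟩ ⟨h.le, hx.2⟩ h

end Unimodal

noncomputable def bpskSuccessProb (u : ℝ) : ℝ := (1 + √(1 - exp (-u))) / 2

noncomputable def bpskRate (κ t : ℝ) : ℝ := (1 - t) * bpskSuccessProb (κ * t / (1 - t))

noncomputable def bpskRateSlope (κ u : ℝ) : ℝ :=
  -(1 + √(1 - exp (-u))) / 2 + exp (-u) * (u + κ) / (4 * √(1 - exp (-u)))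

section Exponent

variable {κ : ℝ}

theorem strictMonoOn_mul_div_one_sub (hκ : 0 < κ) :
    StrictMonoOn (fun t => κ * t / (1 - t)) (Iio 1) := by
  intro s hs t ht hst
  show κ * s / (1 - s) < κ * t / (1 - t)
  rw [div_lt_div_iff₀ (sub_pos.2 hs) (sub_pos.2 ht)]
  nlinarith [mul_pos hκ (sub_pos.2 hst)]

theorem tendsto_mul_div_one_sub_nhdsGT_zero (hκ : 0 < κ) :
    Tendsto (fun t => κ * t / (1 - t)) (𝓝[>] 0) (𝓝[>] 0) := by
  refine tendsto_nhdsWithin_iff.2 ⟨?_, ?_⟩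
  · have hcont : ContinuousAt (fun t : ℝ => κ * t / (1 - t)) 0 :=
      (continuousAt_const.mul continuousAt_id).div (continuousAt_const.sub continuousAt_id)
        (by norm_num)
    simpa using hcont.tendsto.mono_left nhdsWithin_le_nhds
  · filter_upwards [Ioo_mem_nhdsGT zero_lt_one] with t ht
    exact div_pos (mul_pos hκ ht.1) (sub_pos.2 ht.2)

theorem tendsto_mul_div_one_sub_nhdsLT_one (hκ : 0 < κ) :
    Tendsto (fun t => κ * t / (1 - t)) (𝓝[<] 1) atTop := by
  have hnum : Tendsto (fun t : ℝ => κ * t) (𝓝[<] 1) (𝓝 κ) := by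
    have hcont : Continuous fun t : ℝ => κ * t := by fun_prop
    simpa using (hcont.tendsto 1).mono_left nhdsWithin_le_nhds
  have hden : Tendsto (fun t : ℝ => 1 - t) (𝓝[<] 1) (𝓝[>] 0) := by
    refine tendsto_nhdsWithin_iff.2 ⟨?_, ?_⟩
    · have hcont : Continuous fun t : ℝ => 1 - t := by fun_prop
      simpa using (hcont.tendsto 1).mono_left nhdsWithin_le_nhds
    · filter_upwards [self_mem_nhdsWithin] with t ht
      exact sub_pos.2 (mem_Iio.1 ht)
  simpa [div_eq_mul_inv] using hnum.pos_mul_atTop hκ hden.inv_tendsto_nhdsGT_zero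

end Exponent

theorem hasDerivAt_bpskSuccessProb {u : ℝ} (hu : 0 < u) :
    HasDerivAt bpskSuccessProb (exp (-u) / (4 * √(1 - exp (-u)))) u := by
  have hq : 0 < 1 - exp (-u) := by simpa using hu
  have hexp : HasDerivAt (fun v => 1 - exp (-v)) (exp (-u)) u := by
    simpa using ((hasDerivAt_id u).neg.exp).const_sub 1
  refine (((hexp.sqrt hq.ne').const_add 1).div_const 2).congr_deriv ?_
  field_simp
  ring

theorem hasDerivAt_bpskRateSlope (κ : ℝ) {u : ℝ} (hu : 0 < u) :
    HasDerivAt (bpskRateSlope κ)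
      (-(exp (-u) * (u + κ) * (2 - exp (-u))) / (8 * √(1 - exp (-u)) ^ 3)) u := by
  have hq : 0 < 1 - exp (-u) := by simpa using hu
  have hg : 0 < √(1 - exp (-u)) := Real.sqrt_pos.2 hq
  have hexp : HasDerivAt (fun v => exp (-v)) (-exp (-u)) u := by
    simpa using (hasDerivAt_id u).neg.exp
  have hsqrt : HasDerivAt (fun v => √(1 - exp (-v))) (exp (-u) / (2 * √(1 - exp (-u)))) u := by
    simpa using (hexp.const_sub 1).sqrt hq.ne'
  have hquot := (hexp.mul ((hasDerivAt_id u).add_const κ)).div (hsqrt.const_mul 4)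
    (by positivity)
  refine ((((hsqrt.const_add 1).neg).div_const 2).add hquot).congr_deriv ?_
  simp only [Pi.mul_apply, id]
  set g := √(1 - exp (-u))
  -- eliminate `exp (-u)` in favour of `g` so that the identity becomes rational in `g`
  rw [show exp (-u) = 1 - g ^ 2 by rw [Real.sq_sqrt hq.le]; ring]
  field_simp
  ring

theorem bpskRateSlope_strictAntiOn {κ : ℝ} (hκ : 0 ≤ κ) :
    StrictAntiOn (bpskRateSlope κ) (Ioi 0) := by
  refine strictAntiOn_of_deriv_neg (convex_Ioi 0)
    (fun u hu => (hasDerivAt_bpskRateSlope κ hu).continuousAt.continuousWithinAt) fun u hu => ?_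
  rw [interior_Ioi, mem_Ioi] at hu
  rw [(hasDerivAt_bpskRateSlope κ hu).deriv]
  have hexp : exp (-u) < 1 := by simpa using hu
  have hg : 0 < √(1 - exp (-u)) := Real.sqrt_pos.2 (by linarith)
  have hnum : 0 < exp (-u) * (u + κ) * (2 - exp (-u)) := by
    have := exp_pos (-u)
    have : 0 < u + κ := by linarith
    have : 0 < 2 - exp (-u) := by linarith
    positivity
  exact div_neg_of_neg_of_pos (neg_neg_of_pos hnum) (by positivity)

theorem tendsto_bpskRateSlope_nhdsGT_zero {κ : ℝ} (hκ : 0 < κ) :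
    Tendsto (bpskRateSlope κ) (𝓝[>] 0) atTop := by
  have hsqrt : Tendsto (fun u => √(1 - exp (-u))) (𝓝[>] 0) (𝓝 0) := by
    have hcont : Continuous fun u : ℝ => √(1 - exp (-u)) := by fun_prop
    simpa using (hcont.tendsto 0).mono_left nhdsWithin_le_nhds
  have hden : Tendsto (fun u => 4 * √(1 - exp (-u))) (𝓝[>] 0) (𝓝[>] 0) := by
    refine tendsto_nhdsWithin_iff.2 ⟨by simpa using hsqrt.const_mul 4, ?_⟩
    filter_upwards [self_mem_nhdsWithin] with u (hu : 0 < u)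
    have : 0 < 1 - exp (-u) := by simpa using hu
    exact mul_pos four_pos (Real.sqrt_pos.2 this)
  have hnum : Tendsto (fun u => exp (-u) * (u + κ)) (𝓝[>] 0) (𝓝 κ) := by
    have hcont : Continuous fun u : ℝ => exp (-u) * (u + κ) := by fun_prop
    simpa using (hcont.tendsto 0).mono_left nhdsWithin_le_nhds
  have := (((tendsto_const_nhds (x := (1 : ℝ))).add hsqrt).neg.div_const 2).add_atTop
    (hnum.pos_mul_atTop hκ hden.inv_tendsto_nhdsGT_zero)
  exact this.congr fun u => by simp only [Pi.inv_apply, bpskRateSlope]; ring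

theorem tendsto_bpskRateSlope_atTop (κ : ℝ) :
    Tendsto (bpskRateSlope κ) atTop (𝓝 (-1)) := by
  have hexp := tendsto_exp_neg_atTop_nhds_zero
  have hsqrt : Tendsto (fun u => √(1 - exp (-u))) atTop (𝓝 1) := by
    simpa using ((tendsto_const_nhds (x := (1 : ℝ))).sub hexp).sqrt
  have hnum : Tendsto (fun u => exp (-u) * (u + κ)) atTop (𝓝 0) := by
    have h := (tendsto_pow_mul_exp_neg_atTop_nhds_zero 1).add (hexp.const_mul κ)
    rw [mul_zero, add_zero] at h
    exact h.congr fun u => by ring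
  have := (((tendsto_const_nhds (x := (1 : ℝ))).add hsqrt).neg.div_const 2).add
    (hnum.div (hsqrt.const_mul 4) (by norm_num))
  rw [show (-1 : ℝ) = -(1 + 1) / 2 + 0 / (4 * 1) by norm_num]
  exact this

section Rate

variable {κ : ℝ}

theorem hasDerivAt_bpskRate {t : ℝ} (hκ : 0 < κ) (ht : t ∈ Ioo 0 1) :
    HasDerivAt (bpskRate κ) (bpskRateSlope κ (κ * t / (1 - t))) t := by
  have h1t : 0 < 1 - t := sub_pos.2 ht.2
  have hu : 0 < κ * t / (1 - t) := div_pos (mul_pos hκ ht.1) h1t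
  have hdu : HasDerivAt (fun s => κ * s / (1 - s)) (κ / (1 - t) ^ 2) t := by
    refine (((hasDerivAt_id t).const_mul κ).div ((hasDerivAt_id t).const_sub 1)
      h1t.ne').congr_deriv ?_
    simp only [id]
    field_simp
    ring
  have hS := (hasDerivAt_bpskSuccessProb hu).comp t hdu
  refine (((hasDerivAt_id t).const_sub 1).mul hS).congr_deriv ?_
  simp only [bpskRateSlope, bpskSuccessProb, Function.comp_apply, id]
  have hg : 0 < √(1 - exp (-(κ * t / (1 - t)))) := Real.sqrt_pos.2 (by simpa using hu)
  field_simp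
  ring

theorem deriv_bpskRate_strictAntiOn (hκ : 0 < κ) :
    StrictAntiOn (deriv (bpskRate κ)) (Ioo 0 1) := by
  have hcomp := (bpskRateSlope_strictAntiOn hκ.le).comp_strictMonoOn
    ((strictMonoOn_mul_div_one_sub hκ).mono Ioo_subset_Iio_self)
    fun t ht => div_pos (mul_pos hκ ht.1) (sub_pos.2 ht.2)
  intro s hs t ht hst
  rw [(hasDerivAt_bpskRate hκ hs).deriv, (hasDerivAt_bpskRate hκ ht).deriv]
  exact hcomp hs ht hst

theorem eventually_deriv_bpskRate_pos (hκ : 0 < κ) :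
    ∀ᶠ t in 𝓝[>] 0, 0 < deriv (bpskRate κ) t := by
  filter_upwards [Ioo_mem_nhdsGT zero_lt_one, ((tendsto_bpskRateSlope_nhdsGT_zero hκ).comp
    (tendsto_mul_div_one_sub_nhdsGT_zero hκ)).eventually_gt_atTop 0] with t ht hpos
  rwa [(hasDerivAt_bpskRate hκ ht).deriv]

theorem eventually_deriv_bpskRate_neg (hκ : 0 < κ) :
    ∀ᶠ t in 𝓝[<] 1, deriv (bpskRate κ) t < 0 := by
  have hlim := (tendsto_bpskRateSlope_atTop κ).comp (tendsto_mul_div_one_sub_nhdsLT_one hκ)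
  filter_upwards [Ioo_mem_nhdsLT zero_lt_one,
    hlim.eventually (eventually_lt_nhds (show (-1 : ℝ) < 0 by norm_num))] with t ht hneg
  rwa [(hasDerivAt_bpskRate hκ ht).deriv]

end Rate

/-- Unimodality of the BPSK effective rate `R(t) = (1−t)(1−P_e(t))` on `(0,1)`:
`R′` is strictly decreasing, positive near `0` and negative near `1`, hence has a unique
zero `t*`, `R` is strictly increasing on `(0,t*)`, strictly decreasing on `(t*,1)`, and
`t*` is the unique maximizer of `R` on `(0,1)`. -/
theorem bpsk_rate_unimodal (c : ℝ) (hc : 0 < c) (Pe R : ℝ → ℝ)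
    (hPe : ∀ t : ℝ, Pe t = (1 / 2) * (1 - Real.sqrt (1 - Real.exp (-(4 * c * t / (1 - t))))))
    (hR : ∀ t : ℝ, R t = (1 - t) * (1 - Pe t)) :
    ∃ tstar ∈ Set.Ioo (0 : ℝ) 1,
      StrictAntiOn (deriv R) (Set.Ioo (0 : ℝ) 1) ∧
      (∀ᶠ t in 𝓝[>] (0 : ℝ), 0 < deriv R t) ∧
      (∀ᶠ t in 𝓝[<] (1 : ℝ), deriv R t < 0) ∧
      deriv R tstar = 0 ∧
      (∀ t ∈ Set.Ioo (0 : ℝ) 1, deriv R t = 0 → t = tstar) ∧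
      StrictMonoOn R (Set.Ioo 0 tstar) ∧
      StrictAntiOn R (Set.Ioo tstar 1) ∧
      (∀ t ∈ Set.Ioo (0 : ℝ) 1, t ≠ tstar → R t < R tstar) := by
  obtain rfl : R = bpskRate (4 * c) :=
    funext fun t => by rw [hR, hPe, bpskRate, bpskSuccessProb]; ring
  have h4c : 0 < 4 * c := by positivity
  obtain ⟨tstar, hmem, hzero, huniq, hmono, hanti, hmax⟩ :=
    exists_unimodal_of_strictAntiOn_deriv zero_lt_one
      (fun t ht => (hasDerivAt_bpskRate h4c ht).differentiableAt)
      (deriv_bpskRate_strictAntiOn h4c) (eventually_deriv_bpskRate_pos h4c)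
      (eventually_deriv_bpskRate_neg h4c)
  exact ⟨tstar, hmem, deriv_bpskRate_strictAntiOn h4c, eventually_deriv_bpskRate_pos h4c,
    eventually_deriv_bpskRate_neg h4c, hzero, huniq, hmono, hanti, hmax⟩
end

section
/- (Proposition 1, high-power regime.) Fix |h|² > 0 and let R_P(t) = (1 − t)(1 − P_e(P, t)) for t ∈ (0,1), where P_e(P, t) = ½(1 − √(1 − exp(−4·P·|h|²·t/(1−t)))). Then for every ε > 0 there exists P₀ such that for all P ≥ P₀, every t ∈ (0,1) satisfying R_P(t) = sup_{s ∈ (0,1)} R_P(s) satisfies t < ε; moreover sup_{t ∈ (0,1)} R_P(t) → 1 as P → ∞. -/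
open Filter Topology Set Real

/-!
Since `P_e ≥ 0`, the rate satisfies `R_P(t) ≤ 1 - t`, while for each fixed `δ ∈ (0,1)` the
error probability vanishes as `P → ∞`, so `R_P(δ) → 1 - δ`. Hence `sup R_P → 1`, and a
maximizer `t` obeys `1 - t ≥ R_P(t) = sup R_P`, which forces `t → 0`.
-/

lemma sqrt_one_sub_exp_neg_le_one (x : ℝ) : √(1 - exp (-x)) ≤ 1 :=
  sqrt_le_one.mpr (by linarith [exp_pos (-x)])

lemma tendsto_sqrt_one_sub_exp_neg_atTop :
    Tendsto (fun x => √(1 - exp (-x))) atTop (𝓝 1) := by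
  have h : Tendsto (fun x => 1 - exp (-x)) atTop (𝓝 (1 - 0)) :=
    tendsto_exp_neg_atTop_nhds_zero.const_sub 1
  simpa using h.sqrt

section SupOverUnitInterval

variable {α : Type*} {l : Filter α} {f : α → ℝ → ℝ}

lemma sSup_image_Ioo_le_one (hle : ∀ a, ∀ s ∈ Ioo (0 : ℝ) 1, f a s ≤ 1 - s) (a : α) :
    sSup (f a '' Ioo 0 1) ≤ 1 :=
  Real.sSup_le (by rintro _ ⟨s, hs, rfl⟩; linarith [hle a s hs, hs.1]) zero_le_one

lemma tendsto_sSup_image_Ioo_of_le_one_sub (hle : ∀ a, ∀ s ∈ Ioo (0 : ℝ) 1, f a s ≤ 1 - s)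
    (hlim : ∀ δ ∈ Ioo (0 : ℝ) 1, Tendsto (f · δ) l (𝓝 (1 - δ))) :
    Tendsto (fun a => sSup (f a '' Ioo 0 1)) l (𝓝 1) := by
  have hbdd : ∀ a, BddAbove (f a '' Ioo 0 1) := fun a =>
    ⟨1, by rintro _ ⟨s, hs, rfl⟩; linarith [hle a s hs, hs.1]⟩
  refine tendsto_order.2 ⟨fun b hb => ?_, fun b hb =>
    Eventually.of_forall fun a => (sSup_image_Ioo_le_one hle a).trans_lt hb⟩
  set δ := min ((1 - b) / 2) (1 / 2)
  have hδ : δ ∈ Ioo (0 : ℝ) 1 :=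
    ⟨lt_min (by linarith) (by norm_num), (min_le_right _ _).trans_lt (by norm_num)⟩
  have hbδ : b < 1 - δ := by linarith [min_le_left ((1 - b) / 2) (1 / 2)]
  filter_upwards [(hlim δ hδ).eventually (eventually_gt_nhds hbδ)] with a ha
  exact ha.trans_le (le_csSup (hbdd a) ⟨δ, hδ, rfl⟩)

lemma eventually_lt_of_eq_sSup_image_Ioo (hle : ∀ a, ∀ s ∈ Ioo (0 : ℝ) 1, f a s ≤ 1 - s)
    (hsup : Tendsto (fun a => sSup (f a '' Ioo 0 1)) l (𝓝 1)) {ε : ℝ} (hε : 0 < ε) :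
    ∀ᶠ a in l, ∀ t ∈ Ioo (0 : ℝ) 1, f a t = sSup (f a '' Ioo 0 1) → t < ε := by
  filter_upwards [hsup.eventually (eventually_gt_nhds (by linarith : 1 - ε < 1))]
    with a ha t ht hmax
  linarith [hle a t ht]

end SupOverUnitInterval

/-- Proposition 1, high-power regime: any maximizer of the effective rate
`R_P(t) = (1−t)(1−P_e(P,t))` over `t ∈ (0,1)` tends to `0` as `P → ∞`, and the
supremum of the effective rate tends to `1`. -/
theorem optimal_t_vanishes_high_power (h2 : ℝ) (hh2 : 0 < h2)
    (Pe : ℝ → ℝ → ℝ) (R : ℝ → ℝ → ℝ)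
    (hPe : ∀ P s : ℝ,
      Pe P s = (1 / 2) * (1 - Real.sqrt (1 - Real.exp (-(4 * P * h2 * s / (1 - s))))))
    (hR : ∀ P s : ℝ, R P s = (1 - s) * (1 - Pe P s)) :
    (∀ ε > (0 : ℝ), ∃ P₀ : ℝ, ∀ P ≥ P₀, ∀ t ∈ Set.Ioo (0 : ℝ) 1,
      R P t = sSup (R P '' Set.Ioo (0 : ℝ) 1) → t < ε) ∧
    Tendsto (fun P => sSup (R P '' Set.Ioo (0 : ℝ) 1)) atTop (𝓝 1) := by
  have hle : ∀ P, ∀ s ∈ Ioo (0 : ℝ) 1, R P s ≤ 1 - s := fun P s hs => by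
    rw [hR, hPe]
    nlinarith [hs.2, sqrt_one_sub_exp_neg_le_one (4 * P * h2 * s / (1 - s)),
      sqrt_nonneg (1 - exp (-(4 * P * h2 * s / (1 - s))))]
  have hlim : ∀ δ ∈ Ioo (0 : ℝ) 1, Tendsto (R · δ) atTop (𝓝 (1 - δ)) := fun δ hδ => by
    have hc : 0 < 4 * h2 * δ / (1 - δ) := div_pos (by nlinarith [hδ.1]) (by linarith [hδ.2])
    have harg : Tendsto (fun P : ℝ => 4 * P * h2 * δ / (1 - δ)) atTop atTop :=
      (tendsto_id.atTop_mul_const hc).congr fun P => by simp only [id]; ring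
    have hsqrt := tendsto_sqrt_one_sub_exp_neg_atTop.comp harg
    simp only [hR, hPe]
    simpa using ((hsqrt.const_sub 1).const_mul (1 / 2 : ℝ)).const_sub 1 |>.const_mul (1 - δ)
  have hsup := tendsto_sSup_image_Ioo_of_le_one_sub hle hlim
  exact ⟨fun ε hε => eventually_atTop.1 (eventually_lt_of_eq_sSup_image_Ioo hle hsup hε), hsup⟩
end

section
/- (Proposition 1, low-power regime.) Fix |h|² > 0 and let R_P(t) = (1 − t)(1 − P_e(P, t)) for t ∈ (0,1), where P_e(P, t) = ½(1 − √(1 − exp(−4·P·|h|²·t/(1−t)))). Then for every ε > 0 there exists P₀ > 0 such that for all 0 < P ≤ P₀, every t ∈ (0,1) satisfying R_P(t) = sup_{s ∈ (0,1)} R_P(s) satisfies t < ε; moreover sup_{t ∈ (0,1)} R_P(t) → ½ as P → 0⁺. -/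
open Filter Topology

/-- Proposition 1, low-power regime: any maximizer of the effective rate
`R_P(t) = (1−t)(1−P_e(P,t))` over `t ∈ (0,1)` tends to `0` as `P → 0⁺`, and the
supremum of the effective rate tends to `½`. -/
theorem optimal_t_vanishes_low_power (h2 : ℝ) (hh2 : 0 < h2)
    (Pe : ℝ → ℝ → ℝ) (R : ℝ → ℝ → ℝ)
    (hPe : ∀ P s : ℝ,
      Pe P s = (1 / 2) * (1 - Real.sqrt (1 - Real.exp (-(4 * P * h2 * s / (1 - s))))))
    (hR : ∀ P s : ℝ, R P s = (1 - s) * (1 - Pe P s)) :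
    (∀ ε > (0 : ℝ), ∃ P₀ > (0 : ℝ), ∀ P : ℝ, 0 < P → P ≤ P₀ → ∀ t ∈ Set.Ioo (0 : ℝ) 1,
      R P t = sSup (R P '' Set.Ioo (0 : ℝ) 1) → t < ε) ∧
    Tendsto (fun P => sSup (R P '' Set.Ioo (0 : ℝ) 1)) (𝓝[>] (0 : ℝ)) (𝓝 (1 / 2)) := by
  -- Core bounds on R
  have key : ∀ P : ℝ, 0 < P → ∀ s ∈ Set.Ioo (0:ℝ) 1,
      (1 - s)/2 ≤ R P s ∧ R P s ≤ (1 - s)/2 + Real.sqrt (P * h2) / 2 := by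
    intro P hP s hs
    obtain ⟨hs0, hs1⟩ := hs
    have h1s : 0 < 1 - s := by linarith
    have hx0 : 0 ≤ 4 * P * h2 * s / (1 - s) := by positivity
    have hex : Real.exp (-(4 * P * h2 * s / (1 - s))) ≤ 1 :=
      Real.exp_le_one_iff.mpr (by linarith)
    have hq0 : 0 ≤ 1 - Real.exp (-(4 * P * h2 * s / (1 - s))) := by linarith
    have hqx : 1 - Real.exp (-(4 * P * h2 * s / (1 - s))) ≤ 4 * P * h2 * s / (1 - s) := by
      have := Real.add_one_le_exp (-(4 * P * h2 * s / (1 - s))); linarith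
    have hRs : R P s = (1 - s)/2
        + (1-s) * Real.sqrt (1 - Real.exp (-(4 * P * h2 * s / (1 - s)))) / 2 := by
      rw [hR, hPe]; ring
    have hsq := Real.sqrt_nonneg (1 - Real.exp (-(4 * P * h2 * s / (1 - s))))
    constructor
    · rw [hRs]; nlinarith
    · rw [hRs]
      have hle : (1-s) * Real.sqrt (1 - Real.exp (-(4 * P * h2 * s / (1 - s))))
          ≤ Real.sqrt (P * h2) := by
        rw [show (1-s) * Real.sqrt (1 - Real.exp (-(4 * P * h2 * s / (1 - s))))
            = Real.sqrt ((1-s)^2 * (1 - Real.exp (-(4 * P * h2 * s / (1 - s))))) from ?_]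
        · apply Real.sqrt_le_sqrt
          have hxx : (1-s)^2 * (4 * P * h2 * s / (1 - s)) = 4 * P * h2 * (s * (1-s)) := by
            field_simp
          nlinarith [mul_le_mul_of_nonneg_left hqx (sq_nonneg (1-s)),
            mul_nonneg (mul_nonneg hP.le hh2.le) (sq_nonneg (1 - 2*s))]
        · rw [Real.sqrt_mul (sq_nonneg _), Real.sqrt_sq h1s.le]
      linarith
  -- bddAbove and nonempty of the image set
  have hne : ∀ P : ℝ, (R P '' Set.Ioo (0:ℝ) 1).Nonempty := by
    intro P
    exact ⟨R P (1/2), Set.mem_image_of_mem _ (by norm_num)⟩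
  have hbdd : ∀ P : ℝ, 0 < P → BddAbove (R P '' Set.Ioo (0:ℝ) 1) := by
    intro P hP
    refine ⟨1/2 + Real.sqrt (P * h2) / 2, ?_⟩
    rintro y ⟨s, hs, rfl⟩
    have := (key P hP s hs).2
    have hs0 := hs.1
    linarith
  -- sup lower bound
  have hsup_lb : ∀ P : ℝ, 0 < P → 1/2 ≤ sSup (R P '' Set.Ioo (0:ℝ) 1) := by
    intro P hP
    apply le_of_forall_pos_le_add
    intro ε hε
    set s := min ε (1/2) with hsdef
    have hs0 : 0 < s := lt_min hε (by norm_num)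
    have hs1 : s < 1 := lt_of_le_of_lt (min_le_right _ _) (by norm_num)
    have hsε : s ≤ ε := min_le_left _ _
    have h1 := (key P hP s ⟨hs0, hs1⟩).1
    have h2' : R P s ≤ sSup (R P '' Set.Ioo (0:ℝ) 1) :=
      le_csSup (hbdd P hP) (Set.mem_image_of_mem _ ⟨hs0, hs1⟩)
    linarith
  -- sup upper bound
  have hsup_ub : ∀ P : ℝ, 0 < P →
      sSup (R P '' Set.Ioo (0:ℝ) 1) ≤ 1/2 + Real.sqrt (P * h2) / 2 := by
    intro P hP
    apply csSup_le (hne P)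
    rintro y ⟨s, hs, rfl⟩
    have := (key P hP s hs).2
    have hs0 := hs.1
    linarith
  constructor
  · intro ε hε
    refine ⟨ε^2 / (2 * h2), by positivity, ?_⟩
    intro P hP hPle t ht hmax
    have hub := (key P hP t ht).2
    have hlb := hsup_lb P hP
    rw [hmax] at *
    -- t ≤ sqrt (P * h2)
    have htle : t ≤ Real.sqrt (P * h2) := by linarith
    have h1 : Real.sqrt (P * h2) ≤ Real.sqrt (ε^2 / (2 * h2) * h2) :=
      Real.sqrt_le_sqrt (by nlinarith)
    have h2'' : Real.sqrt (ε^2 / (2 * h2) * h2) < ε := by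
      rw [Real.sqrt_lt' hε]
      rw [div_mul_eq_mul_div, mul_comm (2:ℝ) h2, ← div_div, mul_div_assoc,
        div_self hh2.ne']
      nlinarith
    linarith
  · have hupper : Tendsto (fun P : ℝ => 1/2 + Real.sqrt (P * h2) / 2) (𝓝[>] (0:ℝ))
        (𝓝 (1/2)) := by
      have hc : Continuous (fun P : ℝ => 1/2 + Real.sqrt (P * h2) / 2) := by
        continuity
      have := tendsto_nhdsWithin_of_tendsto_nhds (s := Set.Ioi (0:ℝ)) (hc.tendsto 0)
      simpa using this
    apply tendsto_of_tendsto_of_tendsto_of_le_of_le' tendsto_const_nhds hupper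
    · filter_upwards [self_mem_nhdsWithin] with P hP
      exact hsup_lb P hP
    · filter_upwards [self_mem_nhdsWithin] with P hP
      exact hsup_ub P hP
end
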